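/- Suppose v : ℤ → ℂ^k represents a point of the skew shaped positroid S°_{λ/μ}. Then for every 1 ≤ a ≤ n−k one has v_{a+μ̄_a} ∈ W_{k−μ̄_a}, where W_{k−μ̄_a} = span(v_{b_{μ̄_a+1}},…,v_{b_k}). -/
import Mathlib


/-- The height `λ̄_a` of the `a`-th column (counted from the right) of the
partition `f = (f 1 ≥ ⋯ ≥ f k)` inside the `k × (n-k)` rectangle. -/
def colHeight (n k : ℕ) (f : ℕ → ℕ) (a : ℕ) : ℕ :=
  ((Finset.Icc 1 k).filter (fun i => n - k - a + 1 ≤ f i)).card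

/-- `b_i = n - k - μ_i + i`. -/
def bvec (n k : ℕ) (m : ℕ → ℕ) (i : ℕ) : ℕ := n - k - m i + i

/-- The short label `J(a,i) = {min (a+j-1) (b_j) : j = 1, …, i}`. -/
def shortLabel (n k : ℕ) (m : ℕ → ℕ) (a i : ℕ) : Finset ℕ :=
  (Finset.Icc 1 i).image (fun j => min (a + j - 1) (bvec n k m j))

/-- The label `I'(a,i) = J(a,i) ∪ {b_{i+1}, …, b_k}`. -/
def fullLabel (n k : ℕ) (m : ℕ → ℕ) (a i : ℕ) : Finset ℕ :=
  shortLabel n k m a i ∪ (Finset.Icc (i + 1) k).image (bvec n k m)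

/-- `I_μ = {b_1, …, b_k}`. -/
def Imu (n k : ℕ) (m : ℕ → ℕ) : Finset ℕ := (Finset.Icc 1 k).image (bvec n k m)

/-- The box `(a,i)` belongs to the skew diagram `λ/μ`. -/
def InSkew (n k : ℕ) (l m : ℕ → ℕ) (a i : ℕ) : Prop :=
  1 ≤ a ∧ a ≤ n - k ∧ 1 ≤ i ∧ i ≤ k ∧ colHeight n k m a < i ∧ i ≤ colHeight n k l a

/-- The box `(a,i)` belongs to the boundary ribbon `R(λ/μ)`. -/
def InRibbon (n k : ℕ) (l m : ℕ → ℕ) (a i : ℕ) : Prop :=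
  InSkew n k l m a i ∧ (a = 1 ∨ colHeight n k l (a - 1) ≤ i)

/-- `S` is the `r`-th entry of the Grassmann necklace `I_{λ/μ}`. -/
def IsNecklaceEntry (n k : ℕ) (l m : ℕ → ℕ) (r : ℕ) (S : Finset ℕ) : Prop :=
  (∃ a i, InRibbon n k l m a i ∧ r = a + i - 1 ∧ S = fullLabel n k m a i) ∨
  ((¬ ∃ a i, InRibbon n k l m a i ∧ r = a + i - 1) ∧ S = Imu n k m)

/-- The family `{v_j : j ∈ S}` is a basis of `ℂ^k`. -/
def IsBasisFam (k : ℕ) (v : ℤ → Fin k → ℂ) (S : Finset ℕ) : Prop :=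
  LinearIndependent ℂ (fun j : ↥S => v ((j : ℕ) : ℤ)) ∧
  Submodule.span ℂ ((fun j : ℕ => v (j : ℤ)) '' (S : Set ℕ)) = ⊤

/-- `v : ℤ → ℂ^k` represents a point of the skew shaped positroid `S°_{λ/μ}`. -/
def RepsPoint (n k : ℕ) (l m : ℕ → ℕ) (v : ℤ → Fin k → ℂ) : Prop :=
  (∀ j : ℤ, v (j + (n : ℤ)) = ((-1 : ℂ) ^ (k - 1)) • v j) ∧
  (∀ r ∈ Finset.Icc 1 n, ∀ S : Finset ℕ, IsNecklaceEntry n k l m r S → IsBasisFam k v S) ∧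
  (∀ a : ℕ, 1 ≤ a → a ≤ n - k →
    v ((a + colHeight n k m a : ℕ) : ℤ) ∈
      Submodule.span ℂ ((fun j : ℕ => v (j : ℤ)) ''
        ↑(Finset.Icc (a + colHeight n k m a + 1) (a + colHeight n k l a))))

/-- `V(a,i) = span{v_j : j ∈ J(a,i)}`. -/
noncomputable def Vspace (n k : ℕ) (m : ℕ → ℕ) (v : ℤ → Fin k → ℂ) (a i : ℕ) :
    Submodule ℂ (Fin k → ℂ) :=
  Submodule.span ℂ ((fun j : ℕ => v (j : ℤ)) '' ↑(shortLabel n k m a i))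

/-- `W^op_p = span(v_{b_1}, …, v_{b_p})`. -/
noncomputable def Wop (n k : ℕ) (m : ℕ → ℕ) (v : ℤ → Fin k → ℂ) (p : ℕ) :
    Submodule ℂ (Fin k → ℂ) :=
  Submodule.span ℂ ((fun j : ℕ => v (j : ℤ)) '' ↑((Finset.Icc 1 p).image (bvec n k m)))

/-- `W_p = span(v_{b_{k-p+1}}, …, v_{b_k})`. -/
noncomputable def Wsp (n k : ℕ) (m : ℕ → ℕ) (v : ℤ → Fin k → ℂ) (p : ℕ) :
    Submodule ℂ (Fin k → ℂ) :=
  Submodule.span ℂ ((fun j : ℕ => v (j : ℤ)) '' ↑((Finset.Icc (k - p + 1) k).image (bvec n k m)))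

lemma colHeight_le' (n k : ℕ) (f : ℕ → ℕ) (a : ℕ) : colHeight n k f a ≤ k := by
  unfold colHeight
  calc ((Finset.Icc 1 k).filter (fun i => n - k - a + 1 ≤ f i)).card
      ≤ (Finset.Icc 1 k).card := Finset.card_filter_le _ _
    _ = k := by simp

lemma colHeight_mono' (n k : ℕ) (f : ℕ → ℕ) (a : ℕ) :
    colHeight n k f a ≤ colHeight n k f (a + 1) := by
  apply Finset.card_le_card
  intro x hx
  simp only [Finset.mem_filter, Finset.mem_Icc] at hx ⊢
  omega

lemma le_colHeight_iff' (n k : ℕ) (m : ℕ → ℕ)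
    (hmmono : ∀ i j, 1 ≤ i → i ≤ j → j ≤ k → m j ≤ m i)
    (a i : ℕ) (hi1 : 1 ≤ i) (hik : i ≤ k) :
    i ≤ colHeight n k m a ↔ n - k - a + 1 ≤ m i := by
  constructor
  · intro h
    by_contra hc
    push_neg at hc
    have hsub : (Finset.Icc 1 k).filter (fun j => n - k - a + 1 ≤ m j) ⊆
        Finset.Icc 1 (i - 1) := by
      intro x hx
      simp only [Finset.mem_filter, Finset.mem_Icc] at hx ⊢
      refine ⟨hx.1.1, ?_⟩
      by_contra hxi
      push_neg at hxi
      have := hmmono i x hi1 (by omega) hx.1.2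
      omega
    have hcard := Finset.card_le_card hsub
    unfold colHeight at h
    simp only [Nat.card_Icc] at hcard
    omega
  · intro h
    have hsub : Finset.Icc 1 i ⊆
        (Finset.Icc 1 k).filter (fun j => n - k - a + 1 ≤ m j) := by
      intro x hx
      simp only [Finset.mem_filter, Finset.mem_Icc] at hx ⊢
      exact ⟨⟨hx.1, le_trans hx.2 hik⟩, le_trans h (hmmono x i hx.1 hx.2 hik)⟩
    have hcard := Finset.card_le_card hsub
    unfold colHeight
    simpa using hcard

lemma Wsp_mono' (n k : ℕ) (m : ℕ → ℕ) (v : ℤ → Fin k → ℂ) (p q : ℕ) (h : p ≤ q) :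
    Wsp n k m v p ≤ Wsp n k m v q := by
  apply Submodule.span_mono
  apply Set.image_mono
  exact_mod_cast Finset.image_subset_image (Finset.Icc_subset_Icc (by omega) le_rfl)

lemma bvec_mem_Wsp' (n k : ℕ) (m : ℕ → ℕ) (v : ℤ → Fin k → ℂ) (q i : ℕ)
    (hq : q < i) (hik : i ≤ k) :
    v ((bvec n k m i : ℕ) : ℤ) ∈ Wsp n k m v (k - q) := by
  apply Submodule.subset_span
  refine ⟨bvec n k m i, ?_, rfl⟩
  simp only [Finset.coe_image, Set.mem_image, Finset.mem_coe, Finset.mem_Icc]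
  exact ⟨i, ⟨by omega, hik⟩, rfl⟩

lemma key_skew_mem (n k : ℕ) (l m : ℕ → ℕ)
    (hmmono : ∀ i j, 1 ≤ i → i ≤ j → j ≤ k → m j ≤ m i)
    (v : ℤ → Fin k → ℂ) (hv : RepsPoint n k l m v) :
    ∀ d a i, n - k - a ≤ d → InSkew n k l m a i →
      v ((a + i : ℕ) : ℤ) ∈ Wsp n k m v (k - colHeight n k m a) := by
  intro d
  induction d with
  | zero =>
    intro a i hd hsk
    obtain ⟨ha1, ha2, hi1, hik, hmu, hla⟩ := hsk
    have hmi : ¬ (n - k - a + 1 ≤ m i) := fun h =>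
      absurd ((le_colHeight_iff' n k m hmmono a i hi1 hik).2 h) (by omega)
    have hb : bvec n k m i = a + i := by unfold bvec; omega
    rw [← hb]
    exact bvec_mem_Wsp' n k m v _ i hmu hik
  | succ d ih =>
    intro a i hd hsk
    obtain ⟨ha1, ha2, hi1, hik, hmu, hla⟩ := hsk
    have hmi : ¬ (n - k - a + 1 ≤ m i) := fun h =>
      absurd ((le_colHeight_iff' n k m hmmono a i hi1 hik).2 h) (by omega)
    by_cases hA : m i = n - k - a
    · have hb : bvec n k m i = a + i := by unfold bvec; omega
      rw [← hb]
      exact bvec_mem_Wsp' n k m v _ i hmu hik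
    · have hmilt : m i < n - k - a := by omega
      have han : a < n - k := by omega
      have hc : colHeight n k m (a + 1) < i := by
        by_contra h
        push_neg at h
        have := (le_colHeight_iff' n k m hmmono (a + 1) i hi1 hik).1 h
        omega
      have hWm : Wsp n k m v (k - colHeight n k m (a + 1)) ≤
          Wsp n k m v (k - colHeight n k m a) :=
        Wsp_mono' n k m v _ _ (by have := colHeight_mono' n k m a; omega)
      by_cases hcase : colHeight n k m (a + 1) + 1 = i
      · have hii := hv.2.2 (a + 1) (by omega) (by omega)
        have heq : a + 1 + colHeight n k m (a + 1) = a + i := by omega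
        rw [heq] at hii
        refine hWm (Submodule.span_le.2 ?_ hii)
        rintro x ⟨j', hj', rfl⟩
        simp only [Finset.coe_Icc, Set.mem_Icc] at hj'
        have hlk := colHeight_le' n k l (a + 1)
        have hsk' : InSkew n k l m (a + 1) (j' - (a + 1)) :=
          ⟨by omega, by omega, by omega, by omega, by omega, by omega⟩
        have hmem := ih (a + 1) (j' - (a + 1)) (by omega) hsk'
        have hj'' : a + 1 + (j' - (a + 1)) = j' := by omega
        rwa [hj''] at hmem
      · have hlm := colHeight_mono' n k l a
        have hsk' : InSkew n k l m (a + 1) (i - 1) :=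
          ⟨by omega, by omega, by omega, by omega, by omega, by omega⟩
        have hmem := ih (a + 1) (i - 1) (by omega) hsk'
        have hj'' : a + 1 + (i - 1) = a + i := by omega
        rw [hj''] at hmem
        exact hWm hmem

theorem stmt16 (n k : ℕ) (l m : ℕ → ℕ)
    (hk : 0 < k) (hkn : k < n)
    (hlmono : ∀ i j, 1 ≤ i → i ≤ j → j ≤ k → l j ≤ l i)
    (hl1 : l 1 ≤ n - k)
    (hmmono : ∀ i j, 1 ≤ i → i ≤ j → j ≤ k → m j ≤ m i)
    (hml : ∀ i, 1 ≤ i → i ≤ k → m i ≤ l i)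
    (v : ℤ → Fin k → ℂ) (hv : RepsPoint n k l m v) :
    ∀ a : ℕ, 1 ≤ a → a ≤ n - k →
      v ((a + colHeight n k m a : ℕ) : ℤ) ∈ Wsp n k m v (k - colHeight n k m a) := by
  intro a ha1 ha2
  have hii := hv.2.2 a ha1 ha2
  refine Submodule.span_le.2 ?_ hii
  rintro x ⟨j', hj', rfl⟩
  simp only [Finset.coe_Icc, Set.mem_Icc] at hj'
  have hmk := colHeight_le' n k m a
  have hlk := colHeight_le' n k l a
  have hsk : InSkew n k l m a (j' - a) :=
    ⟨ha1, ha2, by omega, by omega, by omega, by omega⟩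
  have hmem := key_skew_mem n k l m hmmono v hv (n - k - a) a (j' - a) le_rfl hsk
  have hj : a + (j' - a) = j' := by omega
  rwa [hj] at hmem
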